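/- arXiv:2211.14057 — 6 statements merged into one kernel-verified Lean document; each statement's English description precedes it below -/
import Mathlib

section
/- For the cellular flow Hamiltonian H(x₁,x₂) = sin x₁ · sin x₂ and velocity field b = ∇⊥H = (−sin x₁ cos x₂, cos x₁ sin x₂), for any h ∈ (0,1) and any point x ∈ [0,π]² with H(x) = h, one has 2h(1−h) ≤ |b(x)|² ≤ 2(1−h²). -/
open Real Set

/-- For the cellular flow Hamiltonian `H(x₁,x₂) = sin x₁ * sin x₂` with velocity field
`b = (−sin x₁ cos x₂, cos x₁ sin x₂)`, for any `h ∈ (0,1)` and any `x ∈ [0,π]²` with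
`H x = h`, one has `2h(1−h) ≤ |b(x)|² ≤ 2(1−h²)`. -/
theorem stmt_0 (h : ℝ) (hh : h ∈ Ioo (0:ℝ) 1)
    (x₁ x₂ : ℝ) (hx₁ : x₁ ∈ Icc (0:ℝ) π) (hx₂ : x₂ ∈ Icc (0:ℝ) π)
    (hH : Real.sin x₁ * Real.sin x₂ = h) :
    2 * h * (1 - h) ≤ (Real.sin x₁ * Real.cos x₂) ^ 2 + (Real.cos x₁ * Real.sin x₂) ^ 2 ∧
    (Real.sin x₁ * Real.cos x₂) ^ 2 + (Real.cos x₁ * Real.sin x₂) ^ 2 ≤ 2 * (1 - h ^ 2) := by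
  have p1 := Real.sin_sq_add_cos_sq x₁
  have p2 := Real.sin_sq_add_cos_sq x₂
  have n1 : 0 ≤ Real.sin x₁ := Real.sin_nonneg_of_mem_Icc (by simpa using hx₁)
  have n2 : 0 ≤ Real.sin x₂ := Real.sin_nonneg_of_mem_Icc (by simpa using hx₂)
  have b1 : Real.sin x₁ ≤ 1 := Real.sin_le_one x₁
  have b2 : Real.sin x₂ ≤ 1 := Real.sin_le_one x₂
  constructor
  · nlinarith [sq_nonneg (Real.sin x₁ - Real.sin x₂), sq_nonneg (Real.cos x₁), sq_nonneg (Real.cos x₂)]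
  · nlinarith [mul_nonneg (mul_nonneg (sub_nonneg.2 b1) (sub_nonneg.2 b2)) (add_nonneg (add_nonneg n1 n2) (by nlinarith : (0:ℝ) ≤ 1 + Real.sin x₁ * Real.sin x₂)), sq_nonneg (Real.cos x₁ * Real.cos x₂), hh.1.le]
end

section
/- For any h ∈ (0,1), the two integrals 4∫ₕ¹ dx/(√(x²−h²)·√(1−x²)) and 4∫₀¹ dx/(√(1−x²)·√(1−(1−h²)x²)) are equal. -/
open Real Set MeasureTheory

/-! The substitution `x = √(1 - (1 - h²) y²)` maps `(0, 1)` strictly decreasingly onto `(h, 1)`,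
and `|dx/dy|` times the first integrand is the second one, since `x² - h² = (1 - h²)(1 - y²)` and
`1 - x² = (1 - h²) y²`. The change of variables formula for injective maps
(`integral_image_eq_integral_abs_deriv_smul`) needs no integrability, so the identity holds even
though Lean assigns non-integrable functions the integral `0`. -/

section SqrtOneSubMulSq

variable {c : ℝ}

lemma hasDerivAt_sqrt_one_sub_mul_sq {y : ℝ} (hy : 1 - c * y ^ 2 ≠ 0) :
    HasDerivAt (fun y => √(1 - c * y ^ 2)) (-(c * y) / √(1 - c * y ^ 2)) y := by
  convert (((hasDerivAt_pow 2 y).const_mul c).const_sub 1).sqrt hy using 1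
  field_simp
  ring

lemma strictAntiOn_sqrt_one_sub_mul_sq (hc0 : 0 < c) (hc1 : c ≤ 1) :
    StrictAntiOn (fun y => √(1 - c * y ^ 2)) (Icc 0 1) := by
  intro a ha b hb hab
  have hsq : c * a ^ 2 < c * b ^ 2 :=
    mul_lt_mul_of_pos_left (pow_lt_pow_left₀ hab ha.1 two_ne_zero) hc0
  have hb2 : b ^ 2 ≤ 1 := pow_le_one₀ hb.1 hb.2
  apply Real.sqrt_lt_sqrt <;> nlinarith

lemma image_sqrt_one_sub_mul_sq_Ioo (hc0 : 0 < c) (hc1 : c ≤ 1) :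
    (fun y => √(1 - c * y ^ 2)) '' Ioo 0 1 = Ioo √(1 - c) 1 := by
  have hcont : ContinuousOn (fun y : ℝ => √(1 - c * y ^ 2)) (Icc 0 1) := by fun_prop
  simpa using hcont.image_Ioo_of_strictAntiOn zero_le_one
    (strictAntiOn_sqrt_one_sub_mul_sq hc0 hc1)

end SqrtOneSubMulSq

lemma abs_deriv_mul_comp_sqrt_one_sub_mul_sq {h y : ℝ} (hh : h ^ 2 < 1) (hy : y ∈ Ioo 0 1) :
    |-((1 - h ^ 2) * y) / √(1 - (1 - h ^ 2) * y ^ 2)| *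
        (1 / (√(√(1 - (1 - h ^ 2) * y ^ 2) ^ 2 - h ^ 2) * √(1 - √(1 - (1 - h ^ 2) * y ^ 2) ^ 2))) =
      1 / (√(1 - y ^ 2) * √(1 - (1 - h ^ 2) * y ^ 2)) := by
  obtain ⟨hy0, hy1⟩ := hy
  set c := 1 - h ^ 2
  have hc0 : 0 < c := by linarith
  have hu : 0 < 1 - c * y ^ 2 := by nlinarith
  have hv : 0 < 1 - y ^ 2 := by nlinarith
  rw [sq_sqrt hu.le, show 1 - c * y ^ 2 - h ^ 2 = c * (1 - y ^ 2) by ring,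
    show 1 - (1 - c * y ^ 2) = c * y ^ 2 by ring, sqrt_mul hc0.le, sqrt_mul hc0.le,
    sqrt_sq hy0.le, abs_div, abs_neg, abs_of_pos (by positivity), abs_of_pos (by positivity)]
  have hsc : √c ^ 2 = c := sq_sqrt hc0.le
  have : √c ≠ 0 := by positivity
  field_simp
  rw [hsc]

/-- For any `h ∈ (0,1)`, the two integrals `4∫ₕ¹ dx/(√(x²−h²)·√(1−x²))` and
`4∫₀¹ dx/(√(1−x²)·√(1−(1−h²)x²))` are equal. -/
theorem stmt_1 (h : ℝ) (hh : h ∈ Ioo (0:ℝ) 1) :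
    4 * ∫ x in Ioo h 1, 1 / (Real.sqrt (x ^ 2 - h ^ 2) * Real.sqrt (1 - x ^ 2)) =
    4 * ∫ x in Ioo (0:ℝ) 1, 1 / (Real.sqrt (1 - x ^ 2) * Real.sqrt (1 - (1 - h ^ 2) * x ^ 2)) := by
  obtain ⟨h0, h1⟩ := hh
  have hc0 : 0 < 1 - h ^ 2 := by nlinarith
  have himage : (fun y => √(1 - (1 - h ^ 2) * y ^ 2)) '' Ioo 0 1 = Ioo h 1 := by
    rw [image_sqrt_one_sub_mul_sq_Ioo hc0 (by nlinarith), sub_sub_cancel, sqrt_sq h0.le]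
  rw [← himage, integral_image_eq_integral_abs_deriv_smul measurableSet_Ioo
    (fun y hy => (hasDerivAt_sqrt_one_sub_mul_sq (by nlinarith [hy.1, hy.2])).hasDerivWithinAt)
    ((strictAntiOn_sqrt_one_sub_mul_sq hc0 (by nlinarith)).injOn.mono Ioo_subset_Icc_self)]
  congr 1
  exact setIntegral_congr_fun measurableSet_Ioo fun y hy =>
    abs_deriv_mul_comp_sqrt_one_sub_mul_sq (by nlinarith) hy
end

section
/- Define T(h) = 4∫₀¹ dx/(√(1−x²)·√(1−(1−h²)x²)) for h ∈ (0,1). Then T is differentiable on (0,1), T'(h) < 0, and there exists C > 1 such that for all h ∈ (0,1): 1/(C·h) ≤ −T'(h) ≤ C/h. -/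
/-!
Writing `D = 1 - (1 - h²)x²`, the `h`-derivative of the integrand is `-h x² / (√(1-x²) D^{3/2})`.
Since `D ≥ min(1, h²)`, near a fixed `h₀ > 0` this derivative is dominated by a multiple of
`1/√(1-x²)`, the derivative of `arcsin`, so `T` may be differentiated under the integral sign.

Upper bound: `D ≥ (1 - x + h²)/4` and `1 - x² ≥ 1 - x`, so the derivative is at most
`8h (1-x)^{-1/2} (1-x+h²)^{-3/2}`, which has the explicit primitive
`-2√(1-x) / (h² √(1-x+h²))`; its integral over `(0,1)` is at most `2/h²`.

Lower bound: for `x ∈ (1 - h²/2, 1)` we have `x ≥ 1/2`, `√(1-x²) ≤ h` and `D ≤ 2h²`, so the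
derivative is at least `1/(16h³)` on an interval of length `h²/2`.
-/

open Real Set MeasureTheory

theorem integral_Ioo_eq_sub_of_hasDerivAt_of_nonneg {g g' : ℝ → ℝ} {a b : ℝ} (hab : a ≤ b)
    (hcont : ContinuousOn g (Icc a b)) (hderiv : ∀ x ∈ Ioo a b, HasDerivAt g (g' x) x)
    (hpos : ∀ x ∈ Ioo a b, 0 ≤ g' x) :
    ∫ x in Ioo a b, g' x = g b - g a := by
  rw [← integral_Ioc_eq_integral_Ioo, ← intervalIntegral.integral_of_le hab]
  exact intervalIntegral.integral_eq_sub_of_hasDerivAt_of_le hab hcont hderiv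
    ((intervalIntegrable_iff_integrableOn_Ioc_of_le hab).2
      (intervalIntegral.integrableOn_deriv_of_nonneg hcont hderiv hpos))

theorem integrableOn_one_div_sqrt_one_sub_sq :
    IntegrableOn (fun x : ℝ => 1 / √(1 - x ^ 2)) (Ioo 0 1) :=
  (intervalIntegral.integrableOn_deriv_of_nonneg continuous_arcsin.continuousOn
    (fun x hx => hasDerivAt_arcsin (by linarith [hx.1]) hx.2.ne)
    (fun _ _ => by positivity)).mono_set Ioo_subset_Ioc_self

namespace EllipticPeriod

noncomputable def integrand (h x : ℝ) : ℝ := 1 / (√(1 - x ^ 2) * √(1 - (1 - h ^ 2) * x ^ 2))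

noncomputable def negDerivIntegrand (h x : ℝ) : ℝ :=
  h * x ^ 2 / (√(1 - x ^ 2) * (√(1 - (1 - h ^ 2) * x ^ 2) * (1 - (1 - h ^ 2) * x ^ 2)))

noncomputable def majorant (a x : ℝ) : ℝ :=
  1 / (√(1 - x) * (√(1 - x + a ^ 2) * (1 - x + a ^ 2)))

noncomputable def majorantPrimitive (a x : ℝ) : ℝ := -2 * √(1 - x) / (a ^ 2 * √(1 - x + a ^ 2))

theorem measurable_integrand (h : ℝ) : Measurable (integrand h) := by
  unfold integrand; fun_prop

theorem measurable_negDerivIntegrand (h : ℝ) : Measurable (negDerivIntegrand h) := by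
  unfold negDerivIntegrand; fun_prop

theorem one_sub_mul_sq_pos {x : ℝ} (hx : x ∈ Ioo (0:ℝ) 1) (h : ℝ) :
    0 < 1 - (1 - h ^ 2) * x ^ 2 := by
  nlinarith [hx.1, hx.2, sq_nonneg h, sq_nonneg (h * x)]

theorem le_one_sub_mul_sq {x h c : ℝ} (hx : x ∈ Ioo (0:ℝ) 1) (hc : c ≤ 1) (hch : c ≤ h ^ 2) :
    c ≤ 1 - (1 - h ^ 2) * x ^ 2 := by
  nlinarith [mul_nonneg (sub_nonneg.2 hc) (by nlinarith [hx.1, hx.2] : (0:ℝ) ≤ 1 - x ^ 2),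
    mul_nonneg (sub_nonneg.2 hch) (sq_nonneg x)]

theorem hasDerivAt_integrand {x : ℝ} (hx : x ∈ Ioo (0:ℝ) 1) (h : ℝ) :
    HasDerivAt (integrand · x) (-negDerivIntegrand h x) h := by
  have hc : 0 < √(1 - x ^ 2) := sqrt_pos.2 (by nlinarith [hx.1, hx.2])
  have hD := one_sub_mul_sq_pos hx h
  have hD' : HasDerivAt (fun h => 1 - (1 - h ^ 2) * x ^ 2) (2 * h * x ^ 2) h := by
    simpa using (((hasDerivAt_pow 2 h).const_sub 1).mul_const (x ^ 2)).const_sub 1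
  have hfun : (integrand · x) = (fun y => √(1 - x ^ 2) * √(1 - (1 - y ^ 2) * x ^ 2))⁻¹ := by
    ext y; simp [integrand]
  rw [hfun]
  refine (((hD'.sqrt hD.ne').const_mul _).inv (by positivity)).congr_deriv ?_
  have hs := sqrt_pos.2 hD
  have hs2 := sq_sqrt hD.le
  unfold negDerivIntegrand
  generalize √(1 - (1 - h ^ 2) * x ^ 2) = s at *
  rw [← hs2]
  field_simp

theorem integrand_nonneg (h x : ℝ) : 0 ≤ integrand h x := by
  unfold integrand; positivity

theorem negDerivIntegrand_nonneg {x h : ℝ} (hx : x ∈ Ioo (0:ℝ) 1) (hh : 0 ≤ h) :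
    0 ≤ negDerivIntegrand h x :=
  div_nonneg (by positivity) (mul_nonneg (sqrt_nonneg _)
    (mul_nonneg (sqrt_nonneg _) (one_sub_mul_sq_pos hx h).le))

theorem integrand_le {x h c : ℝ} (hx : x ∈ Ioo (0:ℝ) 1) (hc : 0 < c)
    (hcD : c ^ 2 ≤ 1 - (1 - h ^ 2) * x ^ 2) :
    integrand h x ≤ 1 / c * (1 / √(1 - x ^ 2)) := by
  have hx2 : 0 < √(1 - x ^ 2) := sqrt_pos.2 (by nlinarith [hx.1, hx.2])
  have hsD : c ≤ √(1 - (1 - h ^ 2) * x ^ 2) := le_sqrt_of_sq_le hcD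
  rw [integrand, one_div_mul_one_div, mul_comm c]
  gcongr

theorem negDerivIntegrand_le {x h c : ℝ} (hx : x ∈ Ioo (0:ℝ) 1) (hh : 0 ≤ h) (hc : 0 < c)
    (hcD : c ^ 2 ≤ 1 - (1 - h ^ 2) * x ^ 2) :
    negDerivIntegrand h x ≤ h / c ^ 3 * (1 / √(1 - x ^ 2)) := by
  have hx2 : 0 < √(1 - x ^ 2) := sqrt_pos.2 (by nlinarith [hx.1, hx.2])
  have hsD : c ≤ √(1 - (1 - h ^ 2) * x ^ 2) := le_sqrt_of_sq_le hcD
  have hnum : h * x ^ 2 ≤ h := mul_le_of_le_one_right hh (by nlinarith [hx.1, hx.2])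
  calc negDerivIntegrand h x ≤ h / (√(1 - x ^ 2) * (c * c ^ 2)) := by
        unfold negDerivIntegrand; gcongr
    _ = h / c ^ 3 * (1 / √(1 - x ^ 2)) := by field_simp

theorem negDerivIntegrand_le_majorant {x h : ℝ} (hx : x ∈ Ioo (0:ℝ) 1) (hh : h ∈ Ioo (0:ℝ) 1) :
    negDerivIntegrand h x ≤ 8 * h * majorant h x := by
  obtain ⟨hx0, hx1⟩ := hx
  obtain ⟨hh0, hh1⟩ := hh
  have hu : 0 < √(1 - x) := sqrt_pos.2 (by linarith)
  have hv : 0 < 1 - x + h ^ 2 := by nlinarith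
  have hD : (1 - x + h ^ 2) / 4 ≤ 1 - (1 - h ^ 2) * x ^ 2 := by
    rcases le_or_gt (4 * x ^ 2) 1 with hx4 | hx4
    · nlinarith [mul_nonneg (sub_nonneg.2 (pow_le_one₀ hh0.le hh1.le : h ^ 2 ≤ 1))
        (sub_nonneg.2 hx4)]
    · nlinarith [mul_nonneg (sq_nonneg h) (by linarith : (0:ℝ) ≤ 4 * x ^ 2 - 1)]
  have hsD : √(1 - x + h ^ 2) / 2 ≤ √(1 - (1 - h ^ 2) * x ^ 2) := by
    rw [show (2:ℝ) = √(2 ^ 2) by simp, ← sqrt_div' _ (by positivity)]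
    exact sqrt_le_sqrt (by linarith)
  have hx2 : √(1 - x) ≤ √(1 - x ^ 2) := sqrt_le_sqrt (by nlinarith)
  have hnum : h * x ^ 2 ≤ h := mul_le_of_le_one_right hh0.le (by nlinarith)
  calc negDerivIntegrand h x
      ≤ h / (√(1 - x) * (√(1 - x + h ^ 2) / 2 * ((1 - x + h ^ 2) / 4))) := by
        unfold negDerivIntegrand; gcongr
    _ = 8 * h * majorant h x := by unfold majorant; field_simp; ring

theorem one_div_le_negDerivIntegrand {x h : ℝ} (hh : h ∈ Ioo (0:ℝ) 1)
    (hx : x ∈ Ioo (1 - h ^ 2 / 2) 1) :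
    1 / (16 * h ^ 3) ≤ negDerivIntegrand h x := by
  obtain ⟨hh0, hh1⟩ := hh
  obtain ⟨hx0, hx1⟩ := hx
  have hx_half : 1 / 2 < x := by nlinarith
  have hD := one_sub_mul_sq_pos ⟨by linarith, hx1⟩ h
  have hx2 : 0 < 1 - x ^ 2 := by nlinarith
  have hsx : √(1 - x ^ 2) ≤ h := sqrt_le_iff.2 ⟨hh0.le, by nlinarith⟩
  have hD2 : 1 - (1 - h ^ 2) * x ^ 2 ≤ 2 * h ^ 2 := by
    nlinarith [mul_le_of_le_one_right (sq_nonneg h) (by nlinarith : x ^ 2 ≤ 1)]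
  have hsD : √(1 - (1 - h ^ 2) * x ^ 2) ≤ 2 * h := sqrt_le_iff.2 ⟨by positivity, by nlinarith⟩
  have hnum : h / 4 ≤ h * x ^ 2 := by
    nlinarith [mul_le_mul_of_nonneg_left (by nlinarith : (1:ℝ) / 4 ≤ x ^ 2) hh0.le]
  calc 1 / (16 * h ^ 3) = (h / 4) / (h * (2 * h * (2 * h ^ 2))) := by field_simp; ring
    _ ≤ negDerivIntegrand h x := by unfold negDerivIntegrand; gcongr

theorem hasDerivAt_majorantPrimitive {a x : ℝ} (ha : a ≠ 0) (hx : x < 1) :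
    HasDerivAt (majorantPrimitive a) (majorant a x) x := by
  have hu : 0 < 1 - x := by linarith
  have hv : 0 < 1 - x + a ^ 2 := by positivity
  have h1 : HasDerivAt (fun x => 1 - x) (-1) x := by simpa using (hasDerivAt_id x).const_sub 1
  have h2 : HasDerivAt (fun x => 1 - x + a ^ 2) (-1) x := h1.add_const _
  refine (((h1.sqrt hu.ne').const_mul (-2)).div ((h2.sqrt hv.ne').const_mul (a ^ 2))
    (by positivity)).congr_deriv ?_
  have e1 := sq_sqrt hu.le
  have e2 := sq_sqrt hv.le
  have hu' := sqrt_pos.2 hu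
  have hv' := sqrt_pos.2 hv
  unfold majorant
  field_simp
  rw [e1, e2]
  ring

theorem continuousOn_majorantPrimitive {a : ℝ} (ha : a ≠ 0) :
    ContinuousOn (majorantPrimitive a) (Iic 1) := by
  refine ContinuousOn.div (by fun_prop) (by fun_prop) fun x (hx : x ≤ 1) => ?_
  have ha2 : 0 < a ^ 2 := by positivity
  have : 0 < 1 - x + a ^ 2 := by linarith
  positivity

theorem majorant_nonneg {a x : ℝ} (hx : x < 1) : 0 ≤ majorant a x := by
  have : 0 < 1 - x + a ^ 2 := by nlinarith [sq_nonneg a]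
  unfold majorant; positivity

theorem integrableOn_majorant {a : ℝ} (ha : a ≠ 0) : IntegrableOn (majorant a) (Ioo 0 1) :=
  (intervalIntegral.integrableOn_deriv_of_nonneg
    ((continuousOn_majorantPrimitive ha).mono Icc_subset_Iic_self)
    (fun _ hx => hasDerivAt_majorantPrimitive ha hx.2)
    (fun _ hx => majorant_nonneg hx.2)).mono_set Ioo_subset_Ioc_self

theorem integral_majorant_le {a : ℝ} (ha : a ≠ 0) : ∫ x in Ioo 0 1, majorant a x ≤ 2 / a ^ 2 := by
  rw [integral_Ioo_eq_sub_of_hasDerivAt_of_nonneg zero_le_one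
    ((continuousOn_majorantPrimitive ha).mono Icc_subset_Iic_self)
    (fun _ hx => hasDerivAt_majorantPrimitive ha hx.2) (fun _ hx => majorant_nonneg hx.2)]
  have h1 : 1 ≤ √(1 + a ^ 2) := one_le_sqrt.2 (by nlinarith [sq_nonneg a])
  simp only [majorantPrimitive, sub_self, sqrt_zero, mul_zero, zero_add, zero_div, sub_zero,
    sqrt_one, mul_one, zero_sub, neg_div, neg_neg]
  have ha2 : 0 < a ^ 2 := by positivity
  gcongr
  exact le_mul_of_one_le_right ha2.le h1

theorem integrableOn_integrand {h : ℝ} (hh : h ∈ Ioo (0:ℝ) 1) :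
    IntegrableOn (integrand h) (Ioo 0 1) :=
  (integrableOn_one_div_sqrt_one_sub_sq.const_mul (1 / h)).mono'
    (measurable_integrand h).aestronglyMeasurable <| (ae_restrict_mem measurableSet_Ioo).mono
      fun x hx => by
        rw [norm_of_nonneg (integrand_nonneg h x)]
        exact integrand_le hx hh.1 (le_one_sub_mul_sq hx (pow_le_one₀ hh.1.le hh.2.le) le_rfl)

theorem integrableOn_negDerivIntegrand {h : ℝ} (hh : h ∈ Ioo (0:ℝ) 1) :
    IntegrableOn (negDerivIntegrand h) (Ioo 0 1) :=
  ((integrableOn_majorant hh.1.ne').const_mul (8 * h)).mono'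
    (measurable_negDerivIntegrand h).aestronglyMeasurable <|
      (ae_restrict_mem measurableSet_Ioo).mono fun x hx => by
        rw [norm_of_nonneg (negDerivIntegrand_nonneg hx hh.1.le)]
        exact negDerivIntegrand_le_majorant hx hh

theorem integral_negDerivIntegrand_le {h : ℝ} (hh : h ∈ Ioo (0:ℝ) 1) :
    ∫ x in Ioo 0 1, negDerivIntegrand h x ≤ 16 / h :=
  calc ∫ x in Ioo 0 1, negDerivIntegrand h x ≤ ∫ x in Ioo 0 1, 8 * h * majorant h x :=
        setIntegral_mono_on (integrableOn_negDerivIntegrand hh)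
          ((integrableOn_majorant hh.1.ne').const_mul _) measurableSet_Ioo
          fun _ hx => negDerivIntegrand_le_majorant hx hh
    _ ≤ 8 * h * (2 / h ^ 2) := by
        rw [integral_const_mul]
        gcongr
        · exact mul_nonneg (by norm_num) hh.1.le
        · exact integral_majorant_le hh.1.ne'
    _ = 16 / h := by field_simp; ring

theorem one_div_le_integral_negDerivIntegrand {h : ℝ} (hh : h ∈ Ioo (0:ℝ) 1) :
    1 / (32 * h) ≤ ∫ x in Ioo 0 1, negDerivIntegrand h x := by
  have h0 : h ≠ 0 := hh.1.ne'
  have hsub : Ioo (1 - h ^ 2 / 2) 1 ⊆ Ioo (0:ℝ) 1 :=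
    Ioo_subset_Ioo_left (by nlinarith [hh.1, hh.2])
  calc 1 / (32 * h) = 1 / (16 * h ^ 3) * volume.real (Ioo (1 - h ^ 2 / 2) (1:ℝ)) := by
        rw [Real.volume_real_Ioo_of_le (by nlinarith [hh.1])]
        field_simp; ring
    _ ≤ ∫ x in Ioo (1 - h ^ 2 / 2) 1, negDerivIntegrand h x :=
        setIntegral_ge_of_const_le_real measurableSet_Ioo (by simp)
          (fun _ hx => one_div_le_negDerivIntegrand hh hx)
          ((integrableOn_negDerivIntegrand hh).mono_set hsub)
    _ ≤ ∫ x in Ioo 0 1, negDerivIntegrand h x :=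
        setIntegral_mono_set (integrableOn_negDerivIntegrand hh)
          ((ae_restrict_mem measurableSet_Ioo).mono fun _ hx => negDerivIntegrand_nonneg hx hh.1.le)
          hsub.eventuallyLE

theorem hasDerivAt_integral_integrand {h₀ : ℝ} (hh₀ : h₀ ∈ Ioo (0:ℝ) 1) :
    HasDerivAt (fun h => ∫ x in Ioo 0 1, integrand h x)
      (-∫ x in Ioo 0 1, negDerivIntegrand h₀ x) h₀ := by
  have hc : 0 < h₀ / 2 := half_pos hh₀.1
  rw [← integral_neg]
  refine (hasDerivAt_integral_of_dominated_loc_of_deriv_le (Metric.ball_mem_nhds h₀ hc)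
    (.of_forall fun h => (measurable_integrand h).aestronglyMeasurable)
    (integrableOn_integrand hh₀) (measurable_negDerivIntegrand h₀).neg.aestronglyMeasurable ?_
    (integrableOn_one_div_sqrt_one_sub_sq.const_mul ((3 * h₀ / 2) / (h₀ / 2) ^ 3))
    ((ae_restrict_mem measurableSet_Ioo).mono fun x hx h _ => hasDerivAt_integrand hx h)).2
  refine (ae_restrict_mem measurableSet_Ioo).mono fun x hx h hball => ?_
  obtain ⟨hlo, hhi⟩ := abs_sub_lt_iff.1 (Metric.mem_ball.1 hball)
  have hcD : (h₀ / 2) ^ 2 ≤ 1 - (1 - h ^ 2) * x ^ 2 :=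
    le_one_sub_mul_sq hx (by nlinarith [hh₀.1, hh₀.2]) (by nlinarith)
  rw [norm_neg, norm_of_nonneg (negDerivIntegrand_nonneg hx (by linarith))]
  refine (negDerivIntegrand_le hx (by linarith) hc hcD).trans ?_
  gcongr
  linarith

end EllipticPeriod

/-- With `T(h) = 4∫₀¹ dx/(√(1−x²)·√(1−(1−h²)x²))`, the function `T` is differentiable on
`(0,1)` with negative derivative, and there is `C > 1` such that
`1/(C h) ≤ −T'(h) ≤ C/h` for all `h ∈ (0,1)`. -/
theorem stmt_3
    (T : ℝ → ℝ)
    (hT : ∀ h ∈ Ioo (0:ℝ) 1, T h =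
      4 * ∫ x in Ioo (0:ℝ) 1, 1 / (Real.sqrt (1 - x ^ 2) * Real.sqrt (1 - (1 - h ^ 2) * x ^ 2))) :
    ∃ C : ℝ, 1 < C ∧ ∀ h ∈ Ioo (0:ℝ) 1,
      ∃ d : ℝ, HasDerivAt T d h ∧ d < 0 ∧ 1 / (C * h) ≤ -d ∧ -d ≤ C / h := by
  refine ⟨64, by norm_num, fun h hh => ?_⟩
  have hlow := EllipticPeriod.one_div_le_integral_negDerivIntegrand hh
  have hup := EllipticPeriod.integral_negDerivIntegrand_le hh
  have hpos : 0 < 1 / (32 * h) := by have := hh.1; positivity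
  refine ⟨4 * -∫ x in Ioo 0 1, EllipticPeriod.negDerivIntegrand h x, ?_, by linarith, ?_, ?_⟩
  · exact ((EllipticPeriod.hasDerivAt_integral_integrand hh).const_mul 4).congr_of_eventuallyEq
      (Filter.eventually_of_mem (isOpen_Ioo.mem_nhds hh) hT)
  · have : 1 / (64 * h) = 1 / (32 * h) / 2 := by ring
    linarith
  · have : 64 / h = 4 * (16 / h) := by ring
    linarith
end

section
/- Define T(h) = 4∫₀¹ dx/(√(1−x²)·√(1−(1−h²)x²)) for h ∈ (0,1). Then T is twice differentiable on (0,1) and there exists C > 0 such that h²·|T''(h)| ≤ C for all h ∈ (0,1). -/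
/-!
The substitution `x = sin θ` removes the endpoint singularity:
`T h = 4 ∫₀^{π/2} dθ / √q`, with `q = cos² θ + h² sin² θ ≥ h²`. On compact subsets of `(0, 1)`
the `h`-derivatives of the integrand are uniformly bounded, so `T` may be differentiated twice
under the integral sign. The second derivative of the integrand is bounded by `3 sin θ / √q³`,
and `cos θ / √q` is an explicit primitive of `-h² sin θ / √q³`, so
`h² |T''(h)| ≤ 4 · 3 h² ∫₀^{π/2} sin θ / √q³ dθ = 12`.
-/

open Real Set MeasureTheory Filter Topology

lemma HasDerivAt.inv_sqrt_pow {f : ℝ → ℝ} {f' x : ℝ} (hf : HasDerivAt f f' x) (hx : 0 < f x)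
    (n : ℕ) : HasDerivAt (fun y => (√(f y) ^ n)⁻¹) (-(n * f' / 2) * (√(f x) ^ (n + 2))⁻¹) x := by
  have hr : 0 < √(f x) := sqrt_pos.2 hx
  refine (((hf.sqrt hx.ne').fun_pow n).fun_inv (pow_pos hr n).ne').congr_deriv ?_
  rcases n with _ | n
  · simp
  · simp only [Nat.add_sub_cancel]; field_simp; ring

lemma hasDerivAt_intervalIntegral_of_abs_deriv_le {F F' : ℝ → ℝ → ℝ} {a b x₀ C : ℝ}
    {s : Set ℝ} (hs : s ∈ 𝓝 x₀) (hF : ∀ x ∈ s, Continuous (F x)) (hF' : Continuous (F' x₀))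
    (hdiff : ∀ x ∈ s, ∀ t, HasDerivAt (F · t) (F' x t) x) (hbound : ∀ x ∈ s, ∀ t, |F' x t| ≤ C) :
    HasDerivAt (fun x => ∫ t in a..b, F x t) (∫ t in a..b, F' x₀ t) x₀ :=
  (intervalIntegral.hasDerivAt_integral_of_dominated_loc_of_deriv_le (bound := fun _ => C) hs
    (eventually_of_mem hs fun x hx => (hF x hx).aestronglyMeasurable)
    ((hF x₀ (mem_of_mem_nhds hs)).intervalIntegrable _ _) hF'.aestronglyMeasurable
    (ae_of_all _ fun t _ x hx => hbound x hx t) intervalIntegrable_const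
    (ae_of_all _ fun t _ x hx => hdiff x hx t)).2

lemma sin_image_Ioo_zero_pi_div_two : sin '' Ioo 0 (π / 2) = Ioo 0 1 := by
  ext x
  constructor
  · rintro ⟨θ, ⟨h0, h1⟩, rfl⟩
    exact ⟨sin_pos_of_pos_of_lt_pi h0 (by linarith [pi_pos]),
      (sin_lt_sin_of_lt_of_le_pi_div_two (by linarith [pi_pos]) le_rfl h1).trans_eq sin_pi_div_two⟩
  · rintro ⟨h0, h1⟩
    exact ⟨arcsin x, ⟨arcsin_pos.2 h0, arcsin_lt_pi_div_two.2 h1⟩, sin_arcsin (by linarith) h1.le⟩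

lemma integral_Ioo_div_sqrt_one_sub_sq (φ : ℝ → ℝ) :
    ∫ x in Ioo 0 1, φ x / √(1 - x ^ 2) = ∫ θ in (0)..(π / 2), φ (sin θ) := by
  rw [← sin_image_Ioo_zero_pi_div_two, integral_image_eq_integral_abs_deriv_smul measurableSet_Ioo
      (fun θ _ => (hasDerivAt_sin θ).hasDerivWithinAt)
      (injOn_sin.mono (Ioo_subset_Icc_self.trans (Icc_subset_Icc (by linarith [pi_pos]) le_rfl))),
    intervalIntegral.integral_of_le (by positivity), integral_Ioc_eq_integral_Ioo]
  refine setIntegral_congr_fun measurableSet_Ioo fun θ ⟨h0, h1⟩ => ?_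
  have hcos : 0 < cos θ := cos_pos_of_mem_Ioo ⟨by linarith, h1⟩
  rw [← cos_sq', sqrt_sq hcos.le, abs_of_pos hcos, smul_eq_mul]
  field_simp

noncomputable def ellipticRadicand (h θ : ℝ) : ℝ := cos θ ^ 2 + h ^ 2 * sin θ ^ 2

lemma ellipticRadicand_eq (h θ : ℝ) : ellipticRadicand h θ = 1 - (1 - h ^ 2) * sin θ ^ 2 := by
  rw [ellipticRadicand, cos_sq']; ring

lemma ellipticRadicand_pos {h : ℝ} (hh : h ≠ 0) (θ : ℝ) : 0 < ellipticRadicand h θ := by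
  rcases eq_or_ne (cos θ) 0 with hc | hc
  · have hs : sin θ ^ 2 = 1 := by nlinarith [sin_sq_add_cos_sq θ]
    simp only [ellipticRadicand, hc, hs]; positivity
  · unfold ellipticRadicand; positivity

lemma sq_le_ellipticRadicand {h : ℝ} (hh : h ^ 2 ≤ 1) (θ : ℝ) : h ^ 2 ≤ ellipticRadicand h θ := by
  have := sin_sq_add_cos_sq θ
  unfold ellipticRadicand; nlinarith [sq_nonneg (cos θ)]

lemma hasDerivAt_ellipticRadicand_left (h θ : ℝ) :
    HasDerivAt (ellipticRadicand · θ) (2 * h * sin θ ^ 2) h :=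
  (((hasDerivAt_pow 2 h).mul_const (sin θ ^ 2)).const_add (cos θ ^ 2)).congr_deriv (by ring)

lemma hasDerivAt_ellipticRadicand_right (h θ : ℝ) :
    HasDerivAt (ellipticRadicand h) (2 * (h ^ 2 - 1) * sin θ * cos θ) θ :=
  (((hasDerivAt_cos θ).fun_pow 2).add
    (((hasDerivAt_sin θ).fun_pow 2).const_mul (h ^ 2))).congr_deriv (by ring)

lemma continuous_inv_sqrt_ellipticRadicand_pow {h : ℝ} (hh : h ≠ 0) (n : ℕ) :
    Continuous fun θ => (√(ellipticRadicand h θ) ^ n)⁻¹ :=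
  (by unfold ellipticRadicand; fun_prop : Continuous _).inv₀ fun θ =>
    (pow_pos (sqrt_pos.2 (ellipticRadicand_pos hh θ)) n).ne'

lemma inv_sqrt_ellipticRadicand_pow_le {c h : ℝ} (hc : 0 < c) (hch : c ≤ h) (h1 : h ≤ 1)
    (n : ℕ) (θ : ℝ) : (√(ellipticRadicand h θ) ^ n)⁻¹ ≤ (c ^ n)⁻¹ := by
  have hh : h ≤ √(ellipticRadicand h θ) :=
    (le_sqrt' (hc.trans_le hch)).2 (sq_le_ellipticRadicand (by nlinarith) θ)
  exact inv_anti₀ (pow_pos hc n) (pow_le_pow_left₀ hc.le (hch.trans hh) n)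

lemma hasDerivAt_cos_mul_inv_sqrt_ellipticRadicand {h : ℝ} (hh : h ≠ 0) (θ : ℝ) :
    HasDerivAt (fun θ => cos θ * (√(ellipticRadicand h θ))⁻¹)
      (-h ^ 2 * (sin θ * (√(ellipticRadicand h θ) ^ 3)⁻¹)) θ := by
  have hD := (hasDerivAt_ellipticRadicand_right h θ).inv_sqrt_pow (ellipticRadicand_pos hh θ) 1
  simp only [pow_one] at hD
  refine ((hasDerivAt_cos θ).mul hD).congr_deriv ?_
  have hr : 0 < √(ellipticRadicand h θ) := sqrt_pos.2 (ellipticRadicand_pos hh θ)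
  have hr2 := sq_sqrt (ellipticRadicand_pos hh θ).le
  generalize √(ellipticRadicand h θ) = r at hr hr2 ⊢
  rw [ellipticRadicand] at hr2
  field_simp
  linear_combination -sin θ * r ^ 3 * hr2 - sin θ * r ^ 3 * h ^ 2 * sin_sq_add_cos_sq θ

lemma integral_sin_mul_inv_sqrt_ellipticRadicand_pow_three {h : ℝ} (hh : h ≠ 0) :
    ∫ θ in (0)..(π / 2), sin θ * (√(ellipticRadicand h θ) ^ 3)⁻¹ = (h ^ 2)⁻¹ := by
  have hcont : Continuous fun θ => sin θ * (√(ellipticRadicand h θ) ^ 3)⁻¹ :=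
    continuous_sin.mul (continuous_inv_sqrt_ellipticRadicand_pow hh 3)
  have hFTC := intervalIntegral.integral_eq_sub_of_hasDerivAt
    (fun θ _ => hasDerivAt_cos_mul_inv_sqrt_ellipticRadicand hh θ)
    ((hcont.const_mul (-h ^ 2)).intervalIntegrable 0 (π / 2))
  have hq0 : ellipticRadicand h 0 = 1 := by simp [ellipticRadicand]
  rw [intervalIntegral.integral_const_mul] at hFTC
  simp only [cos_pi_div_two, cos_zero, hq0, sqrt_one, inv_one, zero_mul, mul_one, zero_sub,
    neg_mul, neg_inj] at hFTC
  exact eq_inv_of_mul_eq_one_right hFTC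

noncomputable def kcIntegrand (h θ : ℝ) : ℝ := (√(ellipticRadicand h θ))⁻¹

noncomputable def kcIntegrand' (h θ : ℝ) : ℝ := -(h * sin θ ^ 2) * (√(ellipticRadicand h θ) ^ 3)⁻¹

noncomputable def kcIntegrand'' (h θ : ℝ) : ℝ :=
  -sin θ ^ 2 * (√(ellipticRadicand h θ) ^ 3)⁻¹ +
    3 * h ^ 2 * sin θ ^ 4 * (√(ellipticRadicand h θ) ^ 5)⁻¹

lemma continuous_kcIntegrand {h : ℝ} (hh : h ≠ 0) : Continuous (kcIntegrand h) := by
  have := continuous_inv_sqrt_ellipticRadicand_pow hh 1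
  simp only [pow_one] at this
  exact this

lemma continuous_kcIntegrand' {h : ℝ} (hh : h ≠ 0) : Continuous (kcIntegrand' h) := by
  have := continuous_inv_sqrt_ellipticRadicand_pow hh 3
  unfold kcIntegrand'; fun_prop

lemma continuous_kcIntegrand'' {h : ℝ} (hh : h ≠ 0) : Continuous (kcIntegrand'' h) := by
  have := continuous_inv_sqrt_ellipticRadicand_pow hh 3
  have := continuous_inv_sqrt_ellipticRadicand_pow hh 5
  unfold kcIntegrand''; fun_prop

lemma hasDerivAt_kcIntegrand {h : ℝ} (hh : h ≠ 0) (θ : ℝ) :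
    HasDerivAt (kcIntegrand · θ) (kcIntegrand' h θ) h := by
  have := (hasDerivAt_ellipticRadicand_left h θ).inv_sqrt_pow (ellipticRadicand_pos hh θ) 1
  simp only [pow_one] at this
  exact this.congr_deriv (by simp only [kcIntegrand']; push_cast; ring)

lemma hasDerivAt_kcIntegrand' {h : ℝ} (hh : h ≠ 0) (θ : ℝ) :
    HasDerivAt (kcIntegrand' · θ) (kcIntegrand'' h θ) h :=
  ((((hasDerivAt_id' h).mul_const (sin θ ^ 2)).fun_neg).fun_mul
    ((hasDerivAt_ellipticRadicand_left h θ).inv_sqrt_pow (ellipticRadicand_pos hh θ) 3)).congr_deriv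
    (by simp only [kcIntegrand'']; push_cast; ring)

lemma abs_kcIntegrand'_le {h : ℝ} (hh : |h| ≤ 1) (θ : ℝ) :
    |kcIntegrand' h θ| ≤ (√(ellipticRadicand h θ) ^ 3)⁻¹ := by
  rw [kcIntegrand', abs_mul, abs_neg, abs_mul, abs_of_nonneg (by positivity : (0:ℝ) ≤ _ ⁻¹),
    abs_of_nonneg (sq_nonneg (sin θ))]
  have hs : sin θ ^ 2 ≤ 1 := sin_sq_le_one θ
  have := abs_nonneg h
  exact mul_le_of_le_one_left (by positivity) (by nlinarith)

lemma abs_kcIntegrand''_le {h : ℝ} (hh : h ≠ 0) (θ : ℝ) :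
    |kcIntegrand'' h θ| ≤ 3 * |sin θ| * (√(ellipticRadicand h θ) ^ 3)⁻¹ := by
  have hr : 0 < √(ellipticRadicand h θ) := sqrt_pos.2 (ellipticRadicand_pos hh θ)
  have hr2 := sq_sqrt (ellipticRadicand_pos hh θ).le
  rw [kcIntegrand'']
  generalize √(ellipticRadicand h θ) = r at hr hr2 ⊢
  rw [ellipticRadicand] at hr2
  have hs : sin θ ^ 2 ≤ |sin θ| := by
    rw [← sq_abs]; nlinarith [abs_sin_le_one θ, abs_nonneg (sin θ)]
  have hq : h ^ 2 * sin θ ^ 2 ≤ r ^ 2 := by rw [hr2]; nlinarith [sq_nonneg (cos θ)]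
  have key : -sin θ ^ 2 * (r ^ 3)⁻¹ + 3 * h ^ 2 * sin θ ^ 4 * (r ^ 5)⁻¹ =
      sin θ ^ 2 * (3 * h ^ 2 * sin θ ^ 2 - r ^ 2) / r ^ 5 := by
    field_simp; ring
  rw [key, abs_le]
  constructor
  · rw [le_div_iff₀ (by positivity)]; field_simp
    nlinarith [sq_nonneg (sin θ), mul_nonneg (sq_nonneg (sin θ)) (sq_nonneg h)]
  · rw [div_le_iff₀ (by positivity)]; field_simp
    nlinarith [sq_nonneg (sin θ), mul_nonneg (sq_nonneg (sin θ)) (sq_nonneg h)]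

/-- `ellipticKc h = K(√(1 - h²))`: the complete elliptic integral of the first kind with
complementary modulus `h`. -/
noncomputable def ellipticKc (h : ℝ) : ℝ := ∫ θ in (0)..(π / 2), kcIntegrand h θ

lemma integral_Ioo_eq_ellipticKc (h : ℝ) :
    ∫ x in Ioo 0 1, 1 / (√(1 - x ^ 2) * √(1 - (1 - h ^ 2) * x ^ 2)) = ellipticKc h := by
  calc ∫ x in Ioo 0 1, 1 / (√(1 - x ^ 2) * √(1 - (1 - h ^ 2) * x ^ 2))
      = ∫ x in Ioo 0 1, (√(1 - (1 - h ^ 2) * x ^ 2))⁻¹ / √(1 - x ^ 2) :=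
        setIntegral_congr_fun measurableSet_Ioo fun x _ => by ring
    _ = ellipticKc h := by
        simp only [integral_Ioo_div_sqrt_one_sub_sq, ellipticKc, kcIntegrand, ellipticRadicand_eq]

lemma hasDerivAt_ellipticKc {h₀ : ℝ} (hh₀ : h₀ ∈ Ioo 0 1) :
    HasDerivAt ellipticKc (∫ θ in (0)..(π / 2), kcIntegrand' h₀ θ) h₀ := by
  have hs : Ioo (h₀ / 2) 1 ∈ 𝓝 h₀ := Ioo_mem_nhds (by linarith [hh₀.1]) hh₀.2
  have hpos : ∀ h ∈ Ioo (h₀ / 2) 1, h ≠ 0 := fun h hh => by linarith [hh.1, hh₀.1]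
  refine hasDerivAt_intervalIntegral_of_abs_deriv_le (C := ((h₀ / 2) ^ 3)⁻¹) hs
    (fun h hh => continuous_kcIntegrand (hpos h hh)) (continuous_kcIntegrand' hh₀.1.ne')
    (fun h hh => hasDerivAt_kcIntegrand (hpos h hh)) fun h hh θ =>
    (abs_kcIntegrand'_le (abs_le.2 ⟨by linarith [hh.1, hh₀.1], hh.2.le⟩) θ).trans
      (inv_sqrt_ellipticRadicand_pow_le (by linarith [hh₀.1]) hh.1.le hh.2.le 3 θ)

lemma hasDerivAt_integral_kcIntegrand' {h₀ : ℝ} (hh₀ : h₀ ∈ Ioo 0 1) :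
    HasDerivAt (fun h => ∫ θ in (0)..(π / 2), kcIntegrand' h θ)
      (∫ θ in (0)..(π / 2), kcIntegrand'' h₀ θ) h₀ := by
  have hs : Ioo (h₀ / 2) 1 ∈ 𝓝 h₀ := Ioo_mem_nhds (by linarith [hh₀.1]) hh₀.2
  have hpos : ∀ h ∈ Ioo (h₀ / 2) 1, h ≠ 0 := fun h hh => by linarith [hh.1, hh₀.1]
  refine hasDerivAt_intervalIntegral_of_abs_deriv_le (C := 3 * ((h₀ / 2) ^ 3)⁻¹) hs
    (fun h hh => continuous_kcIntegrand' (hpos h hh)) (continuous_kcIntegrand'' hh₀.1.ne')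
    (fun h hh => hasDerivAt_kcIntegrand' (hpos h hh)) fun h hh θ => ?_
  calc |kcIntegrand'' h θ| ≤ 3 * |sin θ| * (√(ellipticRadicand h θ) ^ 3)⁻¹ :=
        abs_kcIntegrand''_le (hpos h hh) θ
    _ ≤ 3 * 1 * ((h₀ / 2) ^ 3)⁻¹ :=
        mul_le_mul (by gcongr; exact abs_sin_le_one θ)
          (inv_sqrt_ellipticRadicand_pow_le (by linarith [hh₀.1]) hh.1.le hh.2.le 3 θ)
          (by positivity) (by norm_num)
    _ = 3 * ((h₀ / 2) ^ 3)⁻¹ := by ring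

lemma sq_mul_abs_integral_kcIntegrand''_le {h : ℝ} (hh : h ≠ 0) :
    h ^ 2 * |∫ θ in (0)..(π / 2), kcIntegrand'' h θ| ≤ 3 := by
  have hpi : (0:ℝ) ≤ π / 2 := by positivity
  have hbound : |∫ θ in (0)..(π / 2), kcIntegrand'' h θ| ≤ 3 * (h ^ 2)⁻¹ := calc
    _ ≤ ∫ θ in (0)..(π / 2), |kcIntegrand'' h θ| :=
        intervalIntegral.abs_integral_le_integral_abs hpi
    _ ≤ ∫ θ in (0)..(π / 2), 3 * (sin θ * (√(ellipticRadicand h θ) ^ 3)⁻¹) := by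
      refine intervalIntegral.integral_mono_on hpi
        ((continuous_kcIntegrand'' hh).abs.intervalIntegrable _ _)
        (((continuous_sin.mul (continuous_inv_sqrt_ellipticRadicand_pow hh 3)).const_mul 3)
          |>.intervalIntegrable _ _) fun θ hθ => ?_
      have hsin : 0 ≤ sin θ := sin_nonneg_of_nonneg_of_le_pi hθ.1 (by linarith [hθ.2, pi_pos])
      simpa only [abs_of_nonneg hsin, mul_assoc] using abs_kcIntegrand''_le hh θ
    _ = 3 * (h ^ 2)⁻¹ := by
      rw [intervalIntegral.integral_const_mul,
        integral_sin_mul_inv_sqrt_ellipticRadicand_pow_three hh]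
  calc h ^ 2 * |∫ θ in (0)..(π / 2), kcIntegrand'' h θ| ≤ h ^ 2 * (3 * (h ^ 2)⁻¹) := by gcongr
    _ = 3 := by field_simp

/-- With `T(h) = 4∫₀¹ dx/(√(1−x²)·√(1−(1−h²)x²))`, the function `T` is twice differentiable
on `(0,1)` and there is `C > 0` with `h² |T''(h)| ≤ C` for all `h ∈ (0,1)`. -/
theorem stmt_4
    (T : ℝ → ℝ)
    (hT : ∀ h ∈ Ioo (0:ℝ) 1, T h =
      4 * ∫ x in Ioo (0:ℝ) 1, 1 / (Real.sqrt (1 - x ^ 2) * Real.sqrt (1 - (1 - h ^ 2) * x ^ 2))) :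
    (∀ h ∈ Ioo (0:ℝ) 1, DifferentiableAt ℝ T h ∧ DifferentiableAt ℝ (deriv T) h) ∧
    ∃ C : ℝ, 0 < C ∧ ∀ h ∈ Ioo (0:ℝ) 1, h ^ 2 * |deriv (deriv T) h| ≤ C := by
  have hT' : ∀ h ∈ Ioo (0:ℝ) 1, HasDerivAt T (4 * ∫ θ in (0)..(π / 2), kcIntegrand' h θ) h :=
    fun h hh => ((hasDerivAt_ellipticKc hh).const_mul 4).congr_of_eventuallyEq <|
      eventually_of_mem (isOpen_Ioo.mem_nhds hh) fun y hy => (hT y hy).trans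
        (by rw [integral_Ioo_eq_ellipticKc])
  have hT'' : ∀ h ∈ Ioo (0:ℝ) 1,
      HasDerivAt (deriv T) (4 * ∫ θ in (0)..(π / 2), kcIntegrand'' h θ) h :=
    fun h hh => ((hasDerivAt_integral_kcIntegrand' hh).const_mul 4).congr_of_eventuallyEq <|
      eventually_of_mem (isOpen_Ioo.mem_nhds hh) fun y hy => (hT' y hy).deriv
  refine ⟨fun h hh => ⟨(hT' h hh).differentiableAt, (hT'' h hh).differentiableAt⟩,
    12, by norm_num, fun h hh => ?_⟩
  rw [(hT'' h hh).deriv, abs_mul, abs_of_pos (four_pos : (0:ℝ) < 4), mul_left_comm]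
  linarith [sq_mul_abs_integral_kcIntegrand''_le hh.1.ne']
end

section
/- Suppose a family of solutions ρ^ν to advection-diffusion with fixed initial datum ρ₀ (with ‖ρ₀‖_{L²} > 0) satisfies both (i) the enhanced-dissipation bound ‖ρ^ν(t)‖_{L²} ≤ A e^{−λ(ν)t}‖ρ₀‖_{L²} for all t ≥ 0, and (ii) the vanishing-viscosity bound ‖ρ₀‖_{L²} − ‖ρ^ν(t)‖_{L²} ≤ B√(ν(1+t)³) for all t ≥ 0, with constants A ≥ 1, B > 0 independent of ν. Then there exist C₀ > 0 and ν₀ > 0 such that λ(ν) ≤ C₀·ν^{1/3} for all ν ∈ (0,ν₀). -/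
open Real Set

/-- Abstract scaling argument: if `‖ρ^ν(t)‖ ≤ A e^{−λ(ν)t}‖ρ₀‖` (enhanced dissipation)
and `‖ρ₀‖ − ‖ρ^ν(t)‖ ≤ B √(ν(1+t)³)` (vanishing viscosity), with `A ≥ 1`, `B > 0`
independent of `ν`, then `λ(ν) ≤ C₀ ν^{1/3}` for small `ν`. -/
theorem stmt_14
    (N : ℝ → ℝ → ℝ)   -- N ν t = ‖ρ^ν(t)‖_{L²}
    (R₀ : ℝ) (hR₀ : 0 < R₀)  -- ‖ρ₀‖_{L²}
    (A B : ℝ) (hA : 1 ≤ A) (hB : 0 < B)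
    (lam : ℝ → ℝ)
    (hED : ∀ ν > (0:ℝ), ∀ t ≥ (0:ℝ), N ν t ≤ A * Real.exp (-(lam ν) * t) * R₀)
    (hVV : ∀ ν > (0:ℝ), ∀ t ≥ (0:ℝ), R₀ - N ν t ≤ B * Real.sqrt (ν * (1 + t) ^ 3)) :
    ∃ C₀ > (0:ℝ), ∃ ν₀ > (0:ℝ), ∀ ν ∈ Ioo (0:ℝ) ν₀, lam ν ≤ C₀ * ν ^ ((1:ℝ)/3) := by
  set c : ℝ := R₀ / (2 * B) with hc
  have hcpos : 0 < c := div_pos hR₀ (by linarith)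
  set ε : ℝ := c ^ ((2:ℝ)/3) / 2 with hε
  have hεpos : 0 < ε := by positivity
  have hε3 : ε ^ 3 = c ^ 2 / 8 := by
    have : (c ^ ((2:ℝ)/3)) ^ (3:ℕ) = c ^ (2:ℕ) := by
      rw [← Real.rpow_natCast (c ^ ((2:ℝ)/3)) 3, ← Real.rpow_mul hcpos.le]
      norm_num
    rw [hε]; rw [div_pow]; rw [this]; norm_num
  have hlog : 0 < Real.log (2 * A) := Real.log_pos (by linarith)
  refine ⟨Real.log (2 * A) / ε, by positivity, ε ^ 3, by positivity, ?_⟩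
  rintro ν ⟨hν, hνlt⟩
  set s : ℝ := ν ^ ((1:ℝ)/3) with hs
  have hspos : 0 < s := Real.rpow_pos_of_pos hν _
  have hs3 : s ^ 3 = ν := by
    rw [hs, ← Real.rpow_natCast (ν ^ ((1:ℝ)/3)) 3, ← Real.rpow_mul hν.le]
    norm_num
  have hslt : s < ε := by
    by_contra h
    push_neg at h
    have : ε ^ 3 ≤ s ^ 3 := pow_le_pow_left₀ hεpos.le h 3
    rw [hs3] at this; linarith
  set t : ℝ := ε / s with ht
  have htpos : 0 < t := div_pos hεpos hspos
  have ht1 : 1 ≤ t := (one_le_div hspos).mpr hslt.le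
  -- bound ν (1+t)^3 ≤ c^2
  have hkey : ν * (1 + t) ^ 3 ≤ c ^ 2 := by
    have h1 : (1 + t) ≤ 2 * t := by linarith
    have h2 : (1 + t) ^ 3 ≤ (2 * t) ^ 3 := pow_le_pow_left₀ (by linarith) h1 3
    have h3 : ν * (1 + t) ^ 3 ≤ ν * (8 * t ^ 3) := by nlinarith
    have h4 : ν * (8 * t ^ 3) = 8 * ε ^ 3 := by
      rw [ht, div_pow, ← hs3]
      field_simp
    rw [h4, hε3] at h3; linarith
  have hBsqrt : B * Real.sqrt (ν * (1 + t) ^ 3) ≤ R₀ / 2 := by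
    have h1 : Real.sqrt (ν * (1 + t) ^ 3) ≤ c := by
      calc Real.sqrt (ν * (1 + t) ^ 3) ≤ Real.sqrt (c ^ 2) := Real.sqrt_le_sqrt hkey
        _ = c := Real.sqrt_sq hcpos.le
    calc B * Real.sqrt (ν * (1 + t) ^ 3) ≤ B * c := by nlinarith [Real.sqrt_nonneg (ν * (1 + t) ^ 3)]
      _ = R₀ / 2 := by rw [hc]; field_simp
  have hNlb : R₀ / 2 ≤ N ν t := by
    have := hVV ν hν t (by linarith)
    linarith
  have hNub := hED ν hν t (by linarith)
  have hexp : 1 / (2 * A) ≤ Real.exp (-(lam ν) * t) := by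
    have hApos : 0 < A := by linarith
    have h : R₀ / 2 ≤ A * Real.exp (-(lam ν) * t) * R₀ := le_trans hNlb hNub
    rw [div_le_iff₀ (by linarith : (0:ℝ) < 2 * A)]
    nlinarith [Real.exp_pos (-(lam ν) * t)]
  have hlam : lam ν * t ≤ Real.log (2 * A) := by
    have h := Real.log_le_log (by positivity) hexp
    rw [Real.log_exp, Real.log_div one_ne_zero (by positivity), Real.log_one] at h
    linarith
  -- conclude
  have htval : t = ε / s := ht
  have : lam ν ≤ Real.log (2 * A) / t := by
    rw [le_div_iff₀ htpos]; linarith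
  calc lam ν ≤ Real.log (2 * A) / t := this
    _ = Real.log (2 * A) / ε * s := by
        rw [ht]; field_simp
    _ = Real.log (2 * A) / ε * ν ^ ((1:ℝ)/3) := by rw [hs]
end

section
/- More generally: suppose ‖ρ^ν(t)‖_{L²} ≤ A e^{−λ(ν)t}‖ρ₀‖_{L²} and ‖ρ₀‖_{L²} − ‖ρ^ν(t)‖_{L²} ≤ B√(ν(1+t)^{(3+β)/(1+β)}) for all t ≥ 0, where β ≥ 0. Then there exist C₀, ν₀ > 0 such that λ(ν) ≤ C₀·ν^{(1+β)/(3+β)} for all ν ∈ (0,ν₀). -/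
open Real Set

/-- Abstract scaling argument with parameter `β ≥ 0`: if `‖ρ^ν(t)‖ ≤ A e^{−λ(ν)t}‖ρ₀‖` and
`‖ρ₀‖ − ‖ρ^ν(t)‖ ≤ B √(ν(1+t)^{(3+β)/(1+β)})`, then `λ(ν) ≤ C₀ ν^{(1+β)/(3+β)}` for small `ν`. -/
theorem stmt_15
    (N : ℝ → ℝ → ℝ)   -- N ν t = ‖ρ^ν(t)‖_{L²}
    (R₀ : ℝ) (hR₀ : 0 < R₀)
    (A B β : ℝ) (hA : 1 ≤ A) (hB : 0 < B) (hβ : 0 ≤ β)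
    (lam : ℝ → ℝ)
    (hED : ∀ ν > (0:ℝ), ∀ t ≥ (0:ℝ), N ν t ≤ A * Real.exp (-(lam ν) * t) * R₀)
    (hVV : ∀ ν > (0:ℝ), ∀ t ≥ (0:ℝ),
      R₀ - N ν t ≤ B * Real.sqrt (ν * (1 + t) ^ ((3 + β) / (1 + β)))) :
    ∃ C₀ > (0:ℝ), ∃ ν₀ > (0:ℝ), ∀ ν ∈ Ioo (0:ℝ) ν₀,
      lam ν ≤ C₀ * ν ^ ((1 + β) / (3 + β)) := by
  have h1β : (0:ℝ) < 1 + β := by linarith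
  have h3β : (0:ℝ) < 3 + β := by linarith
  set q : ℝ := (1 + β) / (3 + β) with hq_def
  set p : ℝ := (3 + β) / (1 + β) with hp_def
  have hq : 0 < q := div_pos h1β h3β
  have hp1 : 1 ≤ p := by
    rw [hp_def, le_div_iff₀ h1β]; linarith
  set ε : ℝ := min (1/2 : ℝ) (R₀^2/(8*B^2)) with hε_def
  have hε : 0 < ε := lt_min (by norm_num) (by positivity)
  have hε2 : 2*ε ≤ 1 := by
    have h := min_le_left (1/2:ℝ) (R₀^2/(8*B^2)); rw [← hε_def] at h; linarith
  have hε3 : 2*ε ≤ R₀^2/(4*B^2) := by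
    have h := min_le_right (1/2:ℝ) (R₀^2/(8*B^2)); rw [← hε_def] at h
    have hB2 : (0:ℝ) < B^2 := by positivity
    rw [le_div_iff₀ (by positivity)] at h ⊢
    nlinarith
  have hA0 : (0:ℝ) < A := by linarith
  have hlogA : 0 < Real.log (2*A) := Real.log_pos (by linarith)
  refine ⟨Real.log (2*A) / ε, by positivity, ε ^ (1/q), Real.rpow_pos_of_pos hε _, ?_⟩
  rintro ν ⟨hν, hνlt⟩
  have hνq : ν ^ q < ε := by
    have h := Real.rpow_lt_rpow hν.le hνlt hq
    rwa [← Real.rpow_mul hε.le, one_div_mul_cancel hq.ne', Real.rpow_one] at h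
  have hνqpos : 0 < ν ^ q := Real.rpow_pos_of_pos hν q
  set t : ℝ := ε / ν ^ q with ht_def
  have ht0 : 0 < t := by positivity
  have ht1 : 1 ≤ t := (one_le_div hνqpos).2 hνq.le
  have key : ν * (1 + t) ^ p ≤ 2*ε := by
    have h2 : (1 + t)^p ≤ (2*t)^p :=
      Real.rpow_le_rpow (by linarith) (by linarith) (by linarith)
    have h3 : (2*t)^p = (2*ε)^p * ((ν^q)⁻¹) ^ p := by
      rw [show 2*t = (2*ε) * (ν^q)⁻¹ by rw [ht_def]; field_simp]
      rw [Real.mul_rpow (by positivity) (by positivity)]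
    have h4 : ((ν^q)⁻¹ : ℝ) ^ p = ν⁻¹ := by
      rw [← Real.rpow_neg hν.le, ← Real.rpow_mul hν.le]
      have hqp : -q * p = -1 := by
        rw [hq_def, hp_def]; field_simp
      rw [hqp, Real.rpow_neg_one]
    have h5 : (2*ε)^p ≤ 2*ε := by
      calc (2*ε)^p ≤ (2*ε)^(1:ℝ) :=
            Real.rpow_le_rpow_of_exponent_ge (by positivity) hε2 hp1
        _ = 2*ε := Real.rpow_one _
    calc ν * (1+t)^p ≤ ν * ((2*ε)^p * ν⁻¹) := by
          rw [← h4, ← h3]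
          exact mul_le_mul_of_nonneg_left h2 hν.le
      _ = (2*ε)^p := by field_simp
      _ ≤ 2*ε := h5
  have hsq : B * Real.sqrt (ν * (1+t)^p) ≤ R₀/2 := by
    have hb : ν*(1+t)^p ≤ (R₀/(2*B))^2 := by
      have : (R₀/(2*B))^2 = R₀^2/(4*B^2) := by field_simp; ring
      rw [this]; exact key.trans hε3
    have hs := Real.sqrt_le_sqrt hb
    rw [Real.sqrt_sq (by positivity)] at hs
    calc B * Real.sqrt (ν * (1+t)^p) ≤ B * (R₀/(2*B)) :=
          mul_le_mul_of_nonneg_left hs hB.le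
      _ = R₀/2 := by field_simp
  have hN : R₀/2 ≤ N ν t := by
    have h := hVV ν hν t (by linarith)
    have := h.trans hsq
    linarith
  have hE := hED ν hν t (by linarith)
  have hexp : 1/(2*A) ≤ Real.exp (-(lam ν)*t) := by
    rw [div_le_iff₀ (by positivity)]
    nlinarith [Real.exp_pos (-(lam ν)*t)]
  have hexp2 : Real.exp (lam ν * t) ≤ 2*A := by
    rw [show lam ν * t = -(-(lam ν)*t) by ring, Real.exp_neg,
      inv_le_comm₀ (Real.exp_pos _) (by positivity)]
    rwa [one_div] at hexp
  have hlog : lam ν * t ≤ Real.log (2*A) :=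
    (Real.le_log_iff_exp_le (by positivity)).2 hexp2
  have hfin : lam ν ≤ Real.log (2*A) / t := (le_div_iff₀ ht0).2 hlog
  calc lam ν ≤ Real.log (2*A) / t := hfin
    _ = Real.log (2*A) / ε * ν ^ q := by
        rw [ht_def]; field_simp
end
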